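/- arXiv:2201.05995 — 2 statements merged into one kernel-verified Lean document; each statement's English description precedes it below -/
import Mathlib

section
/- Let 0 ≤ p0 ≤ q0 ≤ 1 and fix M ∈ ℕ. Define channels (stochastic matrices) P_Y(j|i) = C(i,j)·p0^{i−j}·(1−p0)^j for j ≤ i (and 0 otherwise) on {0,…,M}×{0,…,M}, and P_Z(j|i) = q0^i if j = 0 and 1 − q0^i if j = 1, on {0,…,M}×{0,1}. Define Q(0|k) = ((q0−p0)/(1−p0))^k and Q(1|k) = 1 − ((q0−p0)/(1−p0))^k for k ∈ {0,…,M} (assuming p0 < 1). Then P_Z(j|i) = ∑_{k=0}^M Q(j|k)·P_Y(k|i) for all i ∈ {0,…,M} and j ∈ {0,1}; i.e., P_Z is a degraded version of P_Y. -/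
/-!
The probability generating function of row `i` of `P_Y` is `∑ₖ rᵏ P_Y(k|i) = (p0 + (1 - p0) r)ⁱ`
by the binomial theorem. At `r = (q0 - p0)/(1 - p0)` this is `q0ⁱ`, and at `r = 1` it is `1`;
since `Q(0|k) = rᵏ` and `Q(1|k) = 1 - rᵏ`, both columns of `Q ∘ P_Y` follow.
-/

open Finset

theorem sum_pow_mul_binomial_channel {R : Type*} [CommSemiring R] (a b r : R) {i M : ℕ}
    (hi : i ≤ M) :
    ∑ k ∈ range (M + 1), r ^ k * (if k ≤ i then (i.choose k : R) * a ^ (i - k) * b ^ k else 0) =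
      (a + b * r) ^ i := by
  have hsupp : range (i + 1) ⊆ range (M + 1) := range_subset_range.mpr (by omega)
  rw [← sum_subset hsupp fun k _ hk => by rw [if_neg (by simpa using hk), mul_zero],
    add_comm a, add_pow]
  refine sum_congr rfl fun k hk => ?_
  rw [if_pos (Nat.lt_succ_iff.mp (mem_range.mp hk)), mul_pow]
  ring

theorem stmt_2_general (p0 q0 : ℝ) (hp1 : p0 < 1)
    (M : ℕ) (PY PZ Q : ℕ → ℕ → ℝ)
    (hPY : ∀ i j, PY j i = if j ≤ i then (i.choose j : ℝ) * p0 ^ (i - j) * (1 - p0) ^ j else 0)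
    (hPZ0 : ∀ i, PZ 0 i = q0 ^ i)
    (hPZ1 : ∀ i, PZ 1 i = 1 - q0 ^ i)
    (hQ0 : ∀ k, Q 0 k = ((q0 - p0) / (1 - p0)) ^ k)
    (hQ1 : ∀ k, Q 1 k = 1 - ((q0 - p0) / (1 - p0)) ^ k) :
    ∀ i ≤ M, ∀ j ≤ 1, PZ j i = ∑ k ∈ Finset.range (M + 1), Q j k * PY k i := by
  intro i hi j hj
  have hgen (s : ℝ) : ∑ k ∈ range (M + 1), s ^ k * PY k i = (p0 + (1 - p0) * s) ^ i := by
    simp only [hPY]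
    exact sum_pow_mul_binomial_channel _ _ s hi
  have hq0 : p0 + (1 - p0) * ((q0 - p0) / (1 - p0)) = q0 := by
    field_simp [(sub_pos.mpr hp1).ne']
    ring
  interval_cases j
  · simp only [hPZ0, hQ0, hgen, hq0]
  · have htotal := hgen 1
    simp only [one_pow, one_mul, mul_one, add_sub_cancel] at htotal
    simp only [hPZ1, hQ1, sub_mul, one_mul, sum_sub_distrib, htotal]
    rw [hgen, hq0]

/-- The channel `P_Z` is a degraded version of the channel `P_Y` via `Q`. -/
theorem stmt_2 (p0 q0 : ℝ) (hp : 0 ≤ p0) (hpq : p0 ≤ q0) (hq : q0 ≤ 1) (hp1 : p0 < 1)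
    (M : ℕ) (PY PZ Q : ℕ → ℕ → ℝ)
    (hPY : ∀ i j, PY j i = if j ≤ i then (i.choose j : ℝ) * p0 ^ (i - j) * (1 - p0) ^ j else 0)
    (hPZ0 : ∀ i, PZ 0 i = q0 ^ i)
    (hPZ1 : ∀ i, PZ 1 i = 1 - q0 ^ i)
    (hQ0 : ∀ k, Q 0 k = ((q0 - p0) / (1 - p0)) ^ k)
    (hQ1 : ∀ k, Q 1 k = 1 - ((q0 - p0) / (1 - p0)) ^ k) :
    ∀ i ≤ M, ∀ j ≤ 1, PZ j i = ∑ k ∈ Finset.range (M + 1), Q j k * PY k i :=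
  stmt_2_general p0 q0 hp1 M PY PZ Q hPY hPZ0 hPZ1 hQ0 hQ1
end

section
/- Let M ∈ ℕ and m = (m_0,…,m_M) ∈ Δ^M a probability vector with ∑_{i=1}^M i·m_i = δ, and let 0 ≤ p0 ≤ q0 ≤ 1 with q0 < 1. If δ is sufficiently small (depending only on p0, q0), then h(∑_{j=1}^M m_j(1−p0^j)) − h(∑_{j=1}^M m_j(1−q0^j)) ≤ h(δ(1−p0)) − h(δ(1−q0)). -/
/-!
Put `k = (1 - p0) / (1 - q0) ≥ 1`, `A = ∑ m_j (1 - p0^j)` and `B = ∑ m_j (1 - q0^j)`.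
Comparing geometric sums termwise gives `A ≤ k B`, and Bernoulli's inequality gives
`B ≤ δ (1 - q0)`. Since `h` increases on `[0, 1/2]`, `h A - h B ≤ h (k B) - h B`, so it suffices
that `x ↦ h (k x) - h x` is monotone near `0`: its derivative
`k log (1 - k x) - log (1 - x) - k log k - (k - 1) log x` tends to `+∞` as `x → 0⁺`.
-/

open Real Set Finset

/-- The binary entropy function with base-2 logarithm. -/
noncomputable def binEnt (y : ℝ) : ℝ :=
  -(y * Real.logb 2 y) - (1 - y) * Real.logb 2 (1 - y)

lemma binEnt_eq_binEntropy_div (y : ℝ) : binEnt y = binEntropy y / log 2 := by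
  rw [binEnt, binEntropy, logb, logb, log_inv, log_inv]
  ring

lemma one_sub_pow_le_div_mul_one_sub_pow {p q : ℝ} (hp : 0 ≤ p) (hpq : p ≤ q) (hq : q < 1)
    (j : ℕ) : 1 - p ^ j ≤ (1 - p) / (1 - q) * (1 - q ^ j) := by
  have hq' : 0 < 1 - q := sub_pos.2 hq
  have hgeom : ∀ x : ℝ, 1 - x ^ j = (1 - x) * ∑ i ∈ range j, x ^ i := fun x => by
    linear_combination geom_sum_mul x j
  have hsum : ∑ i ∈ range j, p ^ i ≤ ∑ i ∈ range j, q ^ i :=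
    sum_le_sum fun i _ => pow_le_pow_left₀ hp hpq i
  rw [hgeom p, hgeom q, ← mul_assoc, div_mul_cancel₀ _ hq'.ne']
  exact mul_le_mul_of_nonneg_left hsum (by linarith)

namespace Real

lemma hasDerivAt_binEntropy_mul_sub {k x : ℝ} (hk : k ≠ 0) (hx₀ : x ≠ 0) (hx₁ : x ≠ 1)
    (hkx₁ : k * x ≠ 1) :
    HasDerivAt (fun y => binEntropy (k * y) - binEntropy y)
      ((log (1 - k * x) - log (k * x)) * k - (log (1 - x) - log x)) x := by
  have hmul : HasDerivAt (fun y => k * y) k x := by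
    simpa using (hasDerivAt_id x).const_mul k
  exact ((hasDerivAt_binEntropy (mul_ne_zero hk hx₀) hkx₁).comp x hmul).sub
    (hasDerivAt_binEntropy hx₀ hx₁)

lemma monotoneOn_binEntropy_mul_sub {k ε : ℝ} (hk : 1 < k) (hkε : k * ε ≤ 1 / 2)
    (hε : (k - 1) * log ε ≤ -(k * log (2 * k))) :
    MonotoneOn (fun x => binEntropy (k * x) - binEntropy x) (Icc 0 ε) := by
  have hk₀ : 0 < k := by linarith
  refine monotoneOn_of_hasDerivWithinAt_nonneg (convex_Icc 0 ε) (by fun_prop)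
    (f' := fun x => (log (1 - k * x) - log (k * x)) * k - (log (1 - x) - log x))
    (fun x hx => ?_) (fun x hx => ?_)
  all_goals
    rw [interior_Icc] at hx
    obtain ⟨hx₀, hxε⟩ := hx
    have hkx : k * x < 1 / 2 := by nlinarith
  · exact (hasDerivAt_binEntropy_mul_sub hk₀.ne' hx₀.ne' (by nlinarith) (by linarith))
      |>.hasDerivWithinAt
  · have hlog_one_sub_kx : -log 2 ≤ log (1 - k * x) := by
      rw [← log_inv]
      exact log_le_log (by norm_num) (by linarith)
    have hlog_one_sub_x : log (1 - x) ≤ 0 := log_nonpos (by nlinarith) (by linarith)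
    have hlog_x : (k - 1) * log x ≤ -(k * log (2 * k)) :=
      le_trans (mul_le_mul_of_nonneg_left (log_le_log hx₀ hxε.le) (by linarith)) hε
    rw [log_mul hk₀.ne' hx₀.ne']
    rw [log_mul two_ne_zero hk₀.ne'] at hlog_x
    nlinarith

lemma exists_monotoneOn_binEntropy_mul_sub {k : ℝ} (hk : 1 ≤ k) :
    ∃ ε > 0, k * ε ≤ 1 / 2 ∧
      MonotoneOn (fun x => binEntropy (k * x) - binEntropy x) (Icc 0 ε) := by
  rcases hk.eq_or_lt with rfl | hk
  · exact ⟨1 / 2, by norm_num, by norm_num, by simpa using monotoneOn_const⟩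
  have hk₀ : 0 < k := by linarith
  set ε := min (1 / (2 * k)) (exp (-(k * log (2 * k)) / (k - 1)))
  have hε : 0 < ε := lt_min (by positivity) (exp_pos _)
  have hkε : k * ε ≤ 1 / 2 :=
    calc k * ε ≤ k * (1 / (2 * k)) := mul_le_mul_of_nonneg_left (min_le_left _ _) hk₀.le
      _ = 1 / 2 := by field_simp
  refine ⟨ε, hε, hkε, monotoneOn_binEntropy_mul_sub hk hkε ?_⟩
  rw [← le_div_iff₀' (by linarith), ← log_exp (-(k * log (2 * k)) / (k - 1))]
  exact log_le_log hε (min_le_right _ _)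

lemma exists_binEntropy_sub_le_binEntropy_mul_sub {k : ℝ} (hk : 1 ≤ k) :
    ∃ ε > 0, ∀ a b c : ℝ, 0 ≤ a → a ≤ k * b → 0 ≤ b → b ≤ c → c ≤ ε →
      binEntropy a - binEntropy b ≤ binEntropy (k * c) - binEntropy c := by
  obtain ⟨ε, hε, hkε, hmono⟩ := exists_monotoneOn_binEntropy_mul_sub hk
  refine ⟨ε, hε, fun a b c ha hab hb hbc hcε => ?_⟩
  have hkb : k * b ≤ 2⁻¹ := by nlinarith
  have hA : binEntropy a ≤ binEntropy (k * b) :=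
    binEntropy_strictMonoOn.monotoneOn ⟨ha, hab.trans hkb⟩ ⟨by positivity, hkb⟩ hab
  have hB := hmono ⟨hb, hbc.trans hcε⟩ ⟨hb.trans hbc, hcε⟩ hbc
  simp only at hB
  linarith

end Real

/-- For `0 ≤ p0 ≤ q0 < 1` and sufficiently small `δ > 0` (depending only on `p0, q0`),
every probability vector `m` on `{0,…,M}` with first moment `δ` satisfies
`h(∑ m_j (1-p0^j)) - h(∑ m_j (1-q0^j)) ≤ h(δ(1-p0)) - h(δ(1-q0))`. -/
theorem stmt_13 (p0 q0 : ℝ) (h0 : 0 ≤ p0) (hpq : p0 ≤ q0) (hq : q0 < 1) :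
    ∃ δ0 > (0 : ℝ), ∀ δ : ℝ, 0 < δ → δ ≤ δ0 →
      ∀ (M : ℕ) (m : ℕ → ℝ), (∀ i, 0 ≤ m i) →
        (∑ i ∈ Finset.range (M + 1), m i) = 1 →
        (∑ i ∈ Finset.Icc 1 M, (i : ℝ) * m i) = δ →
        binEnt (∑ j ∈ Finset.Icc 1 M, m j * (1 - p0 ^ j))
          - binEnt (∑ j ∈ Finset.Icc 1 M, m j * (1 - q0 ^ j))
          ≤ binEnt (δ * (1 - p0)) - binEnt (δ * (1 - q0)) := by
  have hq0 : 0 < 1 - q0 := sub_pos.2 hq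
  set k := (1 - p0) / (1 - q0)
  obtain ⟨ε, hε, hkey⟩ := exists_binEntropy_sub_le_binEntropy_mul_sub
    ((one_le_div hq0).2 (by linarith) : 1 ≤ k)
  refine ⟨ε / (1 - q0), div_pos hε hq0, fun δ _ hδε M m hm _ hmom => ?_⟩
  have hterm_nonneg : ∀ x, 0 ≤ x → x ≤ 1 → ∀ j, 0 ≤ m j * (1 - x ^ j) := fun x hx₀ hx₁ j =>
    mul_nonneg (hm j) (sub_nonneg.2 (pow_le_one₀ hx₀ hx₁))
  have hA : ∑ j ∈ Icc 1 M, m j * (1 - p0 ^ j) ≤ k * ∑ j ∈ Icc 1 M, m j * (1 - q0 ^ j) := by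
    rw [mul_sum]
    refine sum_le_sum fun j _ => ?_
    rw [mul_left_comm]
    exact mul_le_mul_of_nonneg_left (one_sub_pow_le_div_mul_one_sub_pow h0 hpq hq j) (hm j)
  have hB : ∑ j ∈ Icc 1 M, m j * (1 - q0 ^ j) ≤ δ * (1 - q0) := by
    rw [← hmom, sum_mul]
    refine sum_le_sum fun j _ => ?_
    have hbernoulli := one_add_mul_sub_le_pow (by linarith : -1 ≤ q0) j
    nlinarith [hm j]
  have hkδ : k * (δ * (1 - q0)) = δ * (1 - p0) := by
    rw [mul_left_comm, div_mul_cancel₀ _ hq0.ne']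
  simp only [binEnt_eq_binEntropy_div, ← sub_div, ← hkδ]
  refine div_le_div_of_nonneg_right (hkey _ _ _ ?_ hA ?_ hB ((le_div_iff₀ hq0).1 hδε))
    (log_nonneg one_le_two)
  · exact sum_nonneg fun j _ => hterm_nonneg p0 h0 (by linarith) j
  · exact sum_nonneg fun j _ => hterm_nonneg q0 (by linarith) hq.le j
end
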